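/- If L₁ and L₂ are projective Latin squares of order κ ≥ 3, then L₁ is resolvable: the κ² cells of L₁ can be partitioned into κ pairwise disjoint transversals. -/

import Mathlib

/-- A Latin square of order κ: each symbol occurs exactly once in every row and
exactly once in every column. -/
def IsLatinSquare {κ : ℕ} (L : Fin κ → Fin κ → Fin κ) : Prop :=
  (∀ i : Fin κ, Function.Bijective fun c => L i c) ∧
  (∀ c : Fin κ, Function.Bijective fun i => L i c)

/-- Two Latin squares are projective if for every row index `i` of the first and
every row index `j` of the second there is exactly one column where they agree. -/
def ProjectivePair {κ : ℕ} (L₁ L₂ : Fin κ → Fin κ → Fin κ) : Prop :=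
  ∀ i j : Fin κ, ∃! c : Fin κ, L₁ i c = L₂ j c

/-- A transversal of a Latin square `L`: a set of cells with exactly one cell in each
row, exactly one cell in each column, whose entries comprise all symbols. -/
def IsTransversal {κ : ℕ} (L : Fin κ → Fin κ → Fin κ) (T : Finset (Fin κ × Fin κ)) :
    Prop :=
  (∀ i : Fin κ, ∃! c : Fin κ, (i, c) ∈ T) ∧
  (∀ c : Fin κ, ∃! i : Fin κ, (i, c) ∈ T) ∧
  (∀ s : Fin κ, ∃ p ∈ T, L p.1 p.2 = s)

/-!
The transversals are indexed by the rows of `L₂`: the `j`-th one consists of the cells where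
`L₁` agrees with row `j` of `L₂`. Projectivity gives one such cell per row, the Latin property
of `L₁` one per column, and row `j` of `L₂` runs through all symbols. Since every column of
`L₂` is a permutation, each cell lies in exactly one of them.
-/

namespace LatinSquare

variable {κ : ℕ} (L₁ L₂ : Fin κ → Fin κ → Fin κ)

def agreementCells (j : Fin κ) : Finset (Fin κ × Fin κ) :=
  Finset.univ.filter fun p => L₁ p.1 p.2 = L₂ j p.2

variable {L₁ L₂}

@[simp]
theorem mem_agreementCells {j : Fin κ} {p : Fin κ × Fin κ} :
    p ∈ agreementCells L₁ L₂ j ↔ L₁ p.1 p.2 = L₂ j p.2 := by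
  simp [agreementCells]

theorem isTransversal_agreementCells (h₁ : IsLatinSquare L₁) (h₂ : IsLatinSquare L₂)
    (hproj : ProjectivePair L₁ L₂) (j : Fin κ) :
    IsTransversal L₁ (agreementCells L₁ L₂ j) := by
  refine ⟨fun i => by simpa using hproj i j, fun c => ?_, fun s => ?_⟩
  · simpa using (h₁.2 c).existsUnique (L₂ j c)
  · obtain ⟨c, hc⟩ := (h₂.1 j).surjective s
    obtain ⟨i, hi⟩ := (h₁.2 c).surjective s
    exact ⟨(i, c), by simp [hi, hc], hi⟩

theorem existsUnique_mem_agreementCells (h₂ : IsLatinSquare L₂) (p : Fin κ × Fin κ) :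
    ∃! j : Fin κ, p ∈ agreementCells L₁ L₂ j := by
  simpa [eq_comm] using (h₂.2 p.2).existsUnique (L₁ p.1 p.2)

end LatinSquare

theorem projective_latin_square_resolvable {κ : ℕ}
    (L₁ L₂ : Fin κ → Fin κ → Fin κ)
    (h₁ : IsLatinSquare L₁) (h₂ : IsLatinSquare L₂)
    (hproj : ProjectivePair L₁ L₂) :
    ∃ T : Fin κ → Finset (Fin κ × Fin κ),
      (∀ k, IsTransversal L₁ (T k)) ∧
      (∀ p : Fin κ × Fin κ, ∃! k : Fin κ, p ∈ T k) :=
  ⟨LatinSquare.agreementCells L₁ L₂, LatinSquare.isTransversal_agreementCells h₁ h₂ hproj,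
    LatinSquare.existsUnique_mem_agreementCells h₂⟩
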